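/- arXiv:hep-th/0008071 — 2 statements merged into one kernel-verified Lean document; each statement's English description precedes it below -/
import Mathlib

section
/- Assume λ > 0, 0 < ξ < π(λ+1)/2 and ξ/π − 1/2 ∉ ℤ. Then the number of integers n ≥ 0 with ν_n > 0 equals ⌊ξ/π − 1/2⌋ + 1 (interpreted as 0 when ξ < π/2), and every n with ν_n > 0 also satisfies ν_n < π/2; hence ⌊ξ/π − 1/2⌋ + 1 is exactly the number of ν-type poles lying in the physical strip (0, π/2). -/
open Real

/-- The candidate soliton boundary-binding rapidity `ν_n = ξ/λ − (2n+1)π/(2λ)`. -/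
noncomputable def nuP (lam ξ : ℝ) (n : ℕ) : ℝ :=
  ξ / lam - (2 * (n : ℝ) + 1) * Real.pi / (2 * lam)

/-!
Since `ν_n = (π/λ)(ξ/π − 1/2 − n)`, the condition `ν_n > 0` says `n < ξ/π − 1/2`, so the
positive `ν_n` are counted by `⌈ξ/π − 1/2⌉₊`, which is `⌊ξ/π − 1/2⌋ + 1` off the integers.
The bound `ν_n < π/2` holds for every `n`, because `ν_n ≤ ν_0 = (2ξ − π)/(2λ)` and
`2ξ − π < πλ`.
-/

theorem Nat.ncard_setOf_natCast_lt {R : Type*} [Semiring R] [LinearOrder R] [FloorSemiring R]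
    (a : R) : {n : ℕ | (n : R) < a}.ncard = ⌈a⌉₊ := by
  have hset : {n : ℕ | (n : R) < a} = ↑(Finset.range ⌈a⌉₊) := by
    ext n
    simp [Nat.lt_ceil]
  rw [hset, Set.ncard_coe_finset, Finset.card_range]

theorem Int.natCast_ceil_eq_floor_add_one {R : Type*} [Ring R] [LinearOrder R]
    [IsOrderedRing R] [FloorRing R] {a : R} (ha : -1 < a) (hz : ∀ z : ℤ, a ≠ z) :
    (⌈a⌉₊ : ℤ) = ⌊a⌋ + 1 := by
  rw [Int.natCast_ceil_eq_ceil_of_neg_one_lt ha, Int.ceil_eq_floor_add_one_iff_notMem]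
  rintro ⟨z, rfl⟩
  exact hz z rfl

section Rapidity

variable {lam ξ : ℝ}

theorem nuP_eq (lam ξ : ℝ) (n : ℕ) :
    nuP lam ξ n = Real.pi / lam * (ξ / Real.pi - 1 / 2 - n) := by
  rw [nuP]
  field_simp
  ring

theorem nuP_pos_iff (hlam : 0 < lam) (n : ℕ) :
    0 < nuP lam ξ n ↔ (n : ℝ) < ξ / Real.pi - 1 / 2 := by
  rw [nuP_eq, mul_pos_iff_of_pos_left (by positivity), sub_pos]

theorem nuP_lt_pi_div_two (hlam : 0 < lam) (hξ : ξ < Real.pi * (lam + 1) / 2) (n : ℕ) :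
    nuP lam ξ n < Real.pi / 2 := by
  calc nuP lam ξ n ≤ Real.pi / lam * (ξ / Real.pi - 1 / 2) := by
        rw [nuP_eq]
        gcongr ?_ * ?_
        exact sub_le_self _ n.cast_nonneg
    _ = (2 * ξ - Real.pi) / (2 * lam) := by
        field_simp
    _ < Real.pi / 2 := by
        rw [div_lt_div_iff₀ (by positivity) two_pos]
        linarith

end Rapidity

/-- For `λ > 0`, `0 < ξ < π(λ+1)/2` and `ξ/π − 1/2 ∉ ℤ`, the number of integers `n ≥ 0`
with `ν_n > 0` equals `⌊ξ/π − 1/2⌋ + 1` (which is `0` when `ξ < π/2`), and every `n` with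
`ν_n > 0` also satisfies `ν_n < π/2`; so `⌊ξ/π − 1/2⌋ + 1` is exactly the number of
`ν`-type poles in the physical strip `(0, π/2)`. -/
theorem stmt9 (lam ξ : ℝ) (hlam : 0 < lam) (hxi0 : 0 < ξ)
    (hxi1 : ξ < Real.pi * (lam + 1) / 2) (hni : ∀ z : ℤ, ξ / Real.pi - 1 / 2 ≠ (z : ℝ)) :
    ((Set.ncard {n : ℕ | 0 < nuP lam ξ n} : ℤ) = ⌊ξ / Real.pi - 1 / 2⌋ + 1) ∧
    (∀ n : ℕ, 0 < nuP lam ξ n → nuP lam ξ n < Real.pi / 2) := by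
  refine ⟨?_, fun n _ => nuP_lt_pi_div_two hlam hxi1 n⟩
  have hgt : -1 < ξ / Real.pi - 1 / 2 := by
    have : 0 < ξ / Real.pi := by positivity
    linarith
  simp_rw [nuP_pos_iff hlam]
  rw [Nat.ncard_setOf_natCast_lt, Int.natCast_ceil_eq_floor_add_one hgt hni]
end

section
/- Let m ≥ 1 and n ≥ m be integers, and let F denote the Fibonacci sequence normalised by F(1) = F(2) = 1, F(x+2) = F(x+1) + F(x). Then the number of finite sequences (i_1, j_1, i_2, j_2, …, i_k, j_k) of even length 2k (k ≥ 0, the empty sequence included), with every i_t an integer in {0, 1, …, n−1}, every j_t an integer in {1, …, m}, and satisfying i_t < j_t for all 1 ≤ t ≤ k and j_t ≤ i_{t+1} for all 1 ≤ t ≤ k−1, equals F(2m+1). -/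
/-!
Adding `t - 1` to both `i_t` and `j_t` turns a chain `i_1 < j_1 ≤ i_2 < ⋯ < j_k ≤ m` into a
strictly increasing sequence of `2k` numbers below `m + k`, and back, so there are
`C(m + k, 2k)` chains of length `k`. Summing over `k` gives the diagonal sum
`∑ₖ C(m + k, 2k) = F(2m + 1)` of Pascal's triangle. The bound `i_t < n` is implied by
`i_t < j_t ≤ m ≤ n`.
-/

open Finset

namespace Fin

theorem strictMono_of_lt_of_val_add_one_eq {α : Type*} [Preorder α] {a : ℕ} {f : Fin a → α}
    (h : ∀ i j : Fin a, (i : ℕ) + 1 = j → f i < f j) : StrictMono f := by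
  cases a with
  | zero => exact fun i => i.elim0
  | succ a => exact strictMono_iff_lt_succ.2 fun i => h _ _ rfl

theorem le_val_apply_of_strictMono {a : ℕ} {f : Fin a → ℕ} (hf : StrictMono f) (l : Fin a) :
    (l : ℕ) ≤ f l := by
  obtain ⟨l, hl⟩ := l
  induction l with
  | zero => exact Nat.zero_le _
  | succ l ih => exact (ih (by omega)).trans_lt (hf (mk_lt_mk.2 l.lt_succ_self))

theorem val_apply_add_le_of_strictMono {a b : ℕ} {f : Fin a → Fin b} (hf : StrictMono f)
    (l : Fin a) : (f l : ℕ) + (a - l) ≤ b := by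
  have hrev : StrictMono fun i : Fin a => ((f i.rev).rev : ℕ) :=
    fun i j hij => rev_lt_rev.2 (hf (rev_lt_rev.2 hij))
  have := le_val_apply_of_strictMono hrev l.rev
  simp only [val_rev, rev_rev] at this
  omega

end Fin

theorem Nat.card_orderEmbedding_fin (a b : ℕ) : Nat.card (Fin a ↪o Fin b) = b.choose a := by
  rw [Nat.card_congr Set.powersetCard.ofFinEmbEquiv, Set.powersetCard.card, Nat.card_fin]

def Equiv.subtypeSigmaEquivSigmaSubtype {α : Type*} {β : α → Type*} (P : Sigma β → Prop) :
    {p : Sigma β // P p} ≃ Σ a, {b : β a // P ⟨a, b⟩} where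
  toFun p := ⟨p.1.1, p.1.2, p.2⟩
  invFun q := ⟨⟨q.1, q.2.1⟩, q.2.2⟩
  left_inv _ := rfl
  right_inv _ := rfl

theorem Nat.fib_two_mul_add_one_eq_sum_choose (m : ℕ) :
    fib (2 * m + 1) = ∑ k ∈ range (m + 1), (m + k).choose (2 * k) := by
  have hlow : ∑ l ∈ range m, l.choose (2 * m - l) = 0 :=
    sum_eq_zero fun l hl => choose_eq_zero_of_lt (by rw [mem_range] at hl; omega)
  rw [fib_succ_eq_sum_choose, Nat.sum_antidiagonal_eq_sum_range_succ_mk,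
    show (2 * m).succ = m + (m + 1) by omega, sum_range_add]
  simp only [hlow, zero_add]
  refine sum_congr rfl fun k hk => ?_
  rw [mem_range] at hk
  rw [← choose_symm_of_eq_add]
  omega

theorem card_sigma_orderEmbedding_fin (m : ℕ) :
    Nat.card (Σ k : ℕ, Fin (2 * k) ↪o Fin (m + k)) = Nat.fib (2 * m + 1) := by
  have hk (k : ℕ) (f : Fin (2 * k) ↪o Fin (m + k)) : k < m + 1 := by
    have := Fin.le_of_embedding f.toEmbedding
    omega
  rw [← Nat.card_congr ((Equiv.sigmaCongrLeft Fin.equivSubtype).trans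
      (Equiv.sigmaSubtypeEquivOfSubset _ _ hk)), Nat.card_sigma]
  simp only [Nat.card_orderEmbedding_fin, Fin.equivSubtype_apply]
  rw [Fin.sum_univ_eq_sum_range (fun k => (m + k).choose (2 * k)),
    Nat.fib_two_mul_add_one_eq_sum_choose]

def IsAlternatingChain (m : ℕ) {k : ℕ} (x : (Fin k → ℕ) × (Fin k → ℕ)) : Prop :=
  (∀ t, 1 ≤ x.2 t ∧ x.2 t ≤ m) ∧ (∀ t, x.1 t < x.2 t) ∧
    (∀ t s : Fin k, (t : ℕ) + 1 = s → x.2 t ≤ x.1 s)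

def interleaveShift {k : ℕ} (x : (Fin k → ℕ) × (Fin k → ℕ)) (l : Fin (2 * k)) : ℕ :=
  (if (l : ℕ) % 2 = 0 then x.1 else x.2) ⟨l / 2, by omega⟩ + l / 2

def unshiftDeinterleave {k b : ℕ} (f : Fin (2 * k) → Fin b) : (Fin k → ℕ) × (Fin k → ℕ) :=
  (fun t => f ⟨2 * t, by omega⟩ - t, fun t => f ⟨2 * t + 1, by omega⟩ - t)

namespace IsAlternatingChain

variable {m k : ℕ} {x : (Fin k → ℕ) × (Fin k → ℕ)}

theorem interleaveShift_lt (hx : IsAlternatingChain m x) (l : Fin (2 * k)) :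
    interleaveShift x l < m + k := by
  obtain ⟨hJ, hIJ, -⟩ := hx
  have hl := l.2
  unfold interleaveShift
  split_ifs
  · have := hIJ ⟨l / 2, by omega⟩
    have := hJ ⟨l / 2, by omega⟩
    omega
  · have := hJ ⟨l / 2, by omega⟩
    omega

theorem strictMono_interleaveShift (hx : IsAlternatingChain m x) :
    StrictMono (interleaveShift x) := by
  obtain ⟨-, hIJ, hJI⟩ := hx
  refine Fin.strictMono_of_lt_of_val_add_one_eq fun i j hij => ?_
  have hj := j.2
  unfold interleaveShift
  rcases Nat.mod_two_eq_zero_or_one i with hi | hi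
  · rw [if_pos hi, if_neg (by omega)]
    have := hIJ ⟨i / 2, by omega⟩
    have hdiv : (j : ℕ) / 2 = i / 2 := by omega
    simp only [hdiv]
    omega
  · rw [if_neg (by omega), if_pos (by omega)]
    have := hJI ⟨i / 2, by omega⟩ ⟨j / 2, by omega⟩ (by simp only; omega)
    omega

end IsAlternatingChain

theorem isAlternatingChain_unshiftDeinterleave {m k : ℕ} (f : Fin (2 * k) ↪o Fin (m + k)) :
    IsAlternatingChain m (unshiftDeinterleave f) := by
  have hlow := Fin.le_val_apply_of_strictMono (f := fun l => (f l : ℕ)) f.strictMono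
  have hup := Fin.val_apply_add_le_of_strictMono f.strictMono
  have hstep (l l' : Fin (2 * k)) (h : (l : ℕ) < l') : (f l : ℕ) < f l' := f.strictMono h
  refine ⟨fun t => ?_, fun t => ?_, fun t s hts => ?_⟩
  · have := hlow ⟨2 * t + 1, by omega⟩
    have := hup ⟨2 * t + 1, by omega⟩
    simp only [unshiftDeinterleave] at *
    omega
  · have := hlow ⟨2 * t, by omega⟩
    have := hstep ⟨2 * t, by omega⟩ ⟨2 * t + 1, by omega⟩ (by simp)
    simp only [unshiftDeinterleave] at *
    omega
  · have := hlow ⟨2 * t + 1, by omega⟩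
    have := hstep ⟨2 * t + 1, by omega⟩ ⟨2 * s, by omega⟩ (by simp only; omega)
    simp only [unshiftDeinterleave] at *
    omega

def alternatingChainEquiv (m k : ℕ) :
    {x : (Fin k → ℕ) × (Fin k → ℕ) // IsAlternatingChain m x} ≃
      (Fin (2 * k) ↪o Fin (m + k)) where
  toFun x := OrderEmbedding.ofStrictMono
    (fun l => ⟨interleaveShift x.1 l, x.2.interleaveShift_lt l⟩)
    fun _ _ h => x.2.strictMono_interleaveShift h
  invFun f := ⟨unshiftDeinterleave f, isAlternatingChain_unshiftDeinterleave f⟩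
  left_inv x := by
    have hdiv (t : ℕ) : (2 * t + 1) / 2 = t := by omega
    ext t <;> simp [unshiftDeinterleave, interleaveShift, hdiv]
  right_inv f := by
    ext l
    have hlow := Fin.le_val_apply_of_strictMono (f := fun l => (f l : ℕ)) f.strictMono l
    simp only [OrderEmbedding.coe_ofStrictMono, interleaveShift, unshiftDeinterleave]
    split_ifs <;> dsimp only
    · rw [show (⟨2 * (l / 2), by omega⟩ : Fin (2 * k)) = l from Fin.ext (by simp only; omega)]
      omega
    · rw [show (⟨2 * (l / 2) + 1, by omega⟩ : Fin (2 * k)) = l from Fin.ext (by simp only; omega)]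
      omega

theorem stmt11_general (m n : ℕ) (hn : m ≤ n) :
    Nat.card {p : (k : ℕ) × (Fin k → ℕ) × (Fin k → ℕ) //
      (∀ t, p.2.1 t < n) ∧ (∀ t, 1 ≤ p.2.2 t ∧ p.2.2 t ≤ m) ∧
      (∀ t : Fin p.1, p.2.1 t < p.2.2 t) ∧
      (∀ t s : Fin p.1, (t : ℕ) + 1 = (s : ℕ) → p.2.2 t ≤ p.2.1 s)} =
    Nat.fib (2 * m + 1) := by
  have hI (p : Σ k, (Fin k → ℕ) × (Fin k → ℕ)) (hp : IsAlternatingChain m p.2) (t : Fin p.1) :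
      p.2.1 t < n :=
    ((hp.2.1 t).trans_le (hp.1 t).2).trans_le hn
  rw [← card_sigma_orderEmbedding_fin m]
  exact Nat.card_congr <|
    (Equiv.subtypeEquivRight fun p => and_iff_right_of_imp (hI p)).trans <|
      (Equiv.subtypeSigmaEquivSigmaSubtype _).trans
        (Equiv.sigmaCongrRight (alternatingChainEquiv m))

/-- Count of charge-0 boundary bound states: the number of alternating chains
`(i_1, j_1, …, i_k, j_k)` of even length `2k` (`k ≥ 0`, the empty chain included), with
`i_t ∈ {0, …, n−1}`, `j_t ∈ {1, …, m}`, `i_t < j_t` for `1 ≤ t ≤ k` and `j_t ≤ i_{t+1}`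
for `1 ≤ t ≤ k−1`, equals the Fibonacci number `F(2m+1)` (with `F(1) = F(2) = 1`,
i.e. `F = Nat.fib`). -/
theorem stmt11 (m n : ℕ) (hm : 1 ≤ m) (hn : m ≤ n) :
    Nat.card {p : (k : ℕ) × (Fin k → ℕ) × (Fin k → ℕ) //
      (∀ t, p.2.1 t < n) ∧ (∀ t, 1 ≤ p.2.2 t ∧ p.2.2 t ≤ m) ∧
      (∀ t : Fin p.1, p.2.1 t < p.2.2 t) ∧
      (∀ t s : Fin p.1, (t : ℕ) + 1 = (s : ℕ) → p.2.2 t ≤ p.2.1 s)} =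
    Nat.fib (2 * m + 1) :=
  stmt11_general m n hn
end
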